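/- If I is a nonzero ideal of R and Z(R) is not an ideal of R (equivalently, there exist x, y ∈ Z(R) with x − y ∉ Z(R)), then the diameter of the zero-divisor graph Γ(R⋈I) equals 3. -/

import Mathlib

/-- The amalgamated duplication of a commutative ring `R` along an ideal `I`,
realized as the subring `{(a, b) : R × R | b - a ∈ I}` of the product ring `R × R`
(equivalently, `{(r, r + i) | r ∈ R, i ∈ I}`). -/
def amalg (R : Type*) [CommRing R] (I : Ideal R) : Subring (R × R) where
  carrier := {p | p.2 - p.1 ∈ I}
  zero_mem' := by simp
  one_mem' := by simp
  add_mem' := by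
    intro a b ha hb
    show (a + b).2 - (a + b).1 ∈ I
    have h : (a + b).2 - (a + b).1 = (a.2 - a.1) + (b.2 - b.1) := by
      simp only [Prod.fst_add, Prod.snd_add]; ring
    rw [h]; exact I.add_mem ha hb
  neg_mem' := by
    intro a ha
    show (-a).2 - (-a).1 ∈ I
    have h : (-a).2 - (-a).1 = -(a.2 - a.1) := by
      simp only [Prod.fst_neg, Prod.snd_neg]; ring
    rw [h]; exact I.neg_mem ha
  mul_mem' := by
    intro a b ha hb
    show (a * b).2 - (a * b).1 ∈ I
    have h : (a * b).2 - (a * b).1 = a.2 * (b.2 - b.1) + b.1 * (a.2 - a.1) := by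
      simp only [Prod.fst_mul, Prod.snd_mul]; ring
    rw [h]; exact I.add_mem (I.mul_mem_left _ hb) (I.mul_mem_left _ ha)

/-- The set of zero-divisors of a commutative ring `S`:
elements `x` such that `x * y = 0` for some `y ≠ 0`. -/
def zdSet (S : Type*) [CommRing S] : Set S := {x | ∃ y, y ≠ 0 ∧ x * y = 0}

/-- The zero-divisor graph `Γ(S)` of a commutative ring `S`: the vertices are the nonzero
zero-divisors of `S`, and distinct vertices `x`, `y` are adjacent iff `x * y = 0`. -/
def zdGraph (S : Type*) [CommRing S] : SimpleGraph {x : S // x ≠ 0 ∧ x ∈ zdSet S} where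
  Adj a b := a ≠ b ∧ (a : S) * (b : S) = 0
  symm := by
    constructor
    rintro a b ⟨h1, h2⟩
    exact ⟨h1.symm, by rwa [mul_comm]⟩
  loopless := by constructor; rintro a ⟨h, -⟩; exact h rfl

section graph
variable {V : Type*} {G : SimpleGraph V}

lemma walk_short {u v : V} (p : G.Walk u v) (h : p.length < 3) :
    u = v ∨ G.Adj u v ∨ ∃ w, G.Adj u w ∧ G.Adj w v := by
  cases p with
  | nil => exact Or.inl rfl
  | cons h1 q =>
    cases q with
    | nil => exact Or.inr (Or.inl h1)
    | cons h2 r =>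
      have hq : r.length = 0 := by
        simp only [SimpleGraph.Walk.length_cons] at h; omega
      have hbv := r.eq_of_length_eq_zero hq
      subst hbv
      exact Or.inr (Or.inr ⟨_, h1, h2⟩)

lemma three_le_edist {u v : V} (h0 : u ≠ v) (h1 : ¬ G.Adj u v)
    (h2 : ∀ w, ¬ (G.Adj u w ∧ G.Adj w v)) : 3 ≤ G.edist u v := by
  by_contra h
  push_neg at h
  have hne : G.edist u v ≠ ⊤ := (h.trans_le le_top).ne
  obtain ⟨p, hp⟩ := SimpleGraph.exists_walk_of_edist_ne_top hne
  have hlen : p.length < 3 := by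
    have h3 : (p.length : ℕ∞) < 3 := hp ▸ h
    exact_mod_cast h3
  rcases walk_short p hlen with h' | h' | ⟨w, ha, hb⟩
  · exact h0 h'
  · exact h1 h'
  · exact h2 w ⟨ha, hb⟩

lemma edist_le_one_of {u v : V} (h : G.Adj u v) : G.edist u v ≤ 3 := by
  have := SimpleGraph.edist_le h.toWalk
  refine this.trans ?_
  simp only [SimpleGraph.Adj.toWalk, SimpleGraph.Walk.length_cons,
    SimpleGraph.Walk.length_nil]
  exact_mod_cast (by norm_num : (0+1:ℕ) ≤ 3)

lemma edist_le_two_of {u v : V} (w : V) (h1 : G.Adj u w) (h2 : G.Adj w v) :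
    G.edist u v ≤ 3 := by
  have := SimpleGraph.edist_le (SimpleGraph.Walk.cons h1 (SimpleGraph.Walk.cons h2
    SimpleGraph.Walk.nil))
  refine this.trans ?_
  simp only [SimpleGraph.Walk.length_cons, SimpleGraph.Walk.length_nil]
  exact_mod_cast (by norm_num : (0+1+1:ℕ) ≤ 3)

lemma edist_le_three_of {u v : V} (w w' : V) (h1 : G.Adj u w) (h2 : G.Adj w w')
    (h3 : G.Adj w' v) : G.edist u v ≤ 3 := by
  have := SimpleGraph.edist_le (SimpleGraph.Walk.cons h1 (SimpleGraph.Walk.cons h2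
    (SimpleGraph.Walk.cons h3 SimpleGraph.Walk.nil)))
  refine this.trans ?_
  simp only [SimpleGraph.Walk.length_cons, SimpleGraph.Walk.length_nil]
  exact_mod_cast (by norm_num : (0+1+1+1:ℕ) ≤ 3)

end graph

section zdupper
variable {S : Type*} [CommRing S]

lemma mem_zdSet {x : S} : x ∈ zdSet S ↔ ∃ y, y ≠ 0 ∧ x * y = 0 := Iff.rfl

/-- make a vertex of the zero-divisor graph -/
def mkv (z t : S) (hz : z ≠ 0) (ht : t ≠ 0) (hzt : z * t = 0) :
    {x : S // x ≠ 0 ∧ x ∈ zdSet S} := ⟨z, hz, mem_zdSet.mpr ⟨t, ht, hzt⟩⟩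

lemma adj_of {u w : {x : S // x ≠ 0 ∧ x ∈ zdSet S}} (hne : (u : S) ≠ (w : S))
    (h : (u : S) * (w : S) = 0) : (zdGraph S).Adj u w :=
  ⟨fun he => hne (congrArg Subtype.val he), h⟩

/-- The diameter bound of Anderson–Livingston: any two vertices of the zero-divisor
graph of a commutative ring are at distance at most `3`. -/
lemma zd_edist_le_three (u v : {x : S // x ≠ 0 ∧ x ∈ zdSet S}) :
    (zdGraph S).edist u v ≤ 3 := by
  by_cases huv : u = v
  · subst huv; simp [SimpleGraph.edist_self]
  obtain ⟨hU0, hUz⟩ := u.2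
  obtain ⟨hV0, hVz⟩ := v.2
  obtain ⟨a, ha0, hUa⟩ := mem_zdSet.mp hUz
  obtain ⟨b, hb0, hVb⟩ := mem_zdSet.mp hVz
  by_cases hprod : (u : S) * (v : S) = 0
  · exact edist_le_one_of ⟨huv, hprod⟩
  by_cases hm : a * b = 0
  · by_cases hab : a = b
    · subst hab
      refine edist_le_two_of (mkv a u ha0 hU0 (by rw [mul_comm]; exact hUa)) ?_ ?_
      · refine adj_of (fun h => hprod ?_) hUa
        rw [show (u:S) = a from h, mul_comm]; exact hVb
      · refine adj_of (fun h => hprod ?_) (by rw [mul_comm]; exact hVb)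
        rw [show (a:S) = (v:S) from h] at hUa; exact hUa
    · by_cases hub : (u : S) * b = 0
      · refine edist_le_two_of (mkv b v hb0 hV0 (by rw [mul_comm]; exact hVb)) ?_ ?_
        · refine adj_of (fun h => hprod ?_) hub
          rw [show (u:S) = b from h, mul_comm]; exact hVb
        · refine adj_of (fun h => hprod ?_) (by rw [mul_comm]; exact hVb)
          rw [show (b:S) = (v:S) from h] at hub; exact hub
      · by_cases hva : (v : S) * a = 0
        · refine edist_le_two_of (mkv a u ha0 hU0 (by rw [mul_comm]; exact hUa)) ?_ ?_
          · refine adj_of (fun h => hprod ?_) hUa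
            rw [show (u:S) = a from h, mul_comm]; exact hva
          · refine adj_of (fun h => hprod ?_) (by rw [mul_comm]; exact hva)
            rw [show (a:S) = (v:S) from h] at hUa; exact hUa
        · refine edist_le_three_of (mkv a u ha0 hU0 (by rw [mul_comm]; exact hUa))
            (mkv b v hb0 hV0 (by rw [mul_comm]; exact hVb)) ?_ ?_ ?_
          · refine adj_of (fun h => hub ?_) hUa
            rw [show (u:S) = a from h]; exact hm
          · exact adj_of hab hm
          · refine adj_of (fun h => hva ?_) (by rw [mul_comm]; exact hVb)
            rw [show (b:S) = (v:S) from h] at hm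
            rw [mul_comm]; exact hm
  · have hUab : (u : S) * (a * b) = 0 := by rw [← mul_assoc, hUa, zero_mul]
    have hVab : (v : S) * (a * b) = 0 := by rw [mul_comm a b, ← mul_assoc, hVb, zero_mul]
    refine edist_le_two_of (mkv (a*b) u hm hU0 (by rw [mul_comm]; exact hUab)) ?_ ?_
    · refine adj_of (fun h => hprod ?_) hUab
      rw [show (u:S) = a*b from h, mul_comm]; exact hVab
    · refine adj_of (fun h => hprod ?_) (by rw [mul_comm]; exact hVab)
      rw [show (a*b:S) = (v:S) from h] at hUab; exact hUab

end zdupper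

section amalgzd
variable {R : Type*} [CommRing R] {I : Ideal R}

lemma mem_amalg' {a b : R} (h : b - a ∈ I) : ((a, b) : R × R) ∈ amalg R I := h

lemma amalg_mk_ne_zero {a b : R} (h : (a,b) ∈ amalg R I) (ha : a ≠ 0) :
    (⟨(a,b), h⟩ : amalg R I) ≠ 0 := by
  intro hh
  rw [Subtype.ext_iff, Prod.ext_iff] at hh
  exact ha hh.1

lemma amalg_mul_eq_zero_iff {a b c d : R} (h1 : (a,b) ∈ amalg R I)
    (h2 : (c,d) ∈ amalg R I) :
    (⟨(a,b), h1⟩ : amalg R I) * ⟨(c,d), h2⟩ = 0 ↔ a * c = 0 ∧ b * d = 0 := by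
  rw [Subtype.ext_iff]
  show ((a,b) : R × R) * (c,d) = 0 ↔ _
  rw [Prod.mk_mul_mk, Prod.mk_eq_zero]

/-- `(a, b)` with `a ∈ Z(R)` is a zero-divisor of the amalgamation. -/
lemma amalg_mem_zd {a b : R} (h : (a,b) ∈ amalg R I) (ha : a ∈ zdSet R) :
    (⟨(a,b), h⟩ : amalg R I) ∈ zdSet (amalg R I) := by
  obtain ⟨c, hc0, hac⟩ := ha
  by_cases hc : ∀ j ∈ I, c * j = 0
  · refine ⟨⟨(c, c), mem_amalg' (by rw [sub_self]; exact I.zero_mem)⟩,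
      amalg_mk_ne_zero _ hc0, (amalg_mul_eq_zero_iff _ _).mpr ⟨hac, ?_⟩⟩
    have hba : b = a + (b - a) := by ring
    rw [hba, add_mul, hac, mul_comm, hc _ h, add_zero]
  · push_neg at hc
    obtain ⟨j, hjI, hcj⟩ := hc
    refine ⟨⟨(c * j, 0), mem_amalg' ?_⟩, amalg_mk_ne_zero _ hcj,
      (amalg_mul_eq_zero_iff _ _).mpr ⟨?_, mul_zero b⟩⟩
    · show (0 : R) - c * j ∈ I
      rw [zero_sub]; exact I.neg_mem (I.mul_mem_left c hjI)
    · rw [← mul_assoc, hac, zero_mul]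

variable [Nontrivial R]

/-- key lemma: a pair of vertices `(x,x)`, `(y, y+i)` at distance at least 3. -/
lemma key (x y i : R) (hx : x ∈ zdSet R) (hy : y ∈ zdSet R) (hi : i ∈ I)
    (hreg : ∀ c, (x + y) * c = 0 → c = 0)
    (hne : ¬ (x = y ∧ i = 0))
    (hadj : ¬ (x * y = 0 ∧ x * (y + i) = 0))
    (hcn : ∀ d, d ∈ I → x * d = 0 → (y + i) * d = 0 → d = 0) :
    ∃ u v : {s : amalg R I // s ≠ 0 ∧ s ∈ zdSet (amalg R I)},
      3 ≤ (zdGraph (amalg R I)).edist u v := by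
  have hx0 : x ≠ 0 := by
    intro h; obtain ⟨c, hc0, hyc⟩ := hy
    exact hc0 (hreg c (by rw [h, zero_add]; exact hyc))
  have hy0 : y ≠ 0 := by
    intro h; obtain ⟨c, hc0, hxc⟩ := hx
    exact hc0 (hreg c (by rw [h, add_zero]; exact hxc))
  have hUm : ((x, x) : R × R) ∈ amalg R I := mem_amalg' (by rw [sub_self]; exact I.zero_mem)
  have hVm : ((y, y + i) : R × R) ∈ amalg R I := mem_amalg' (by simpa using hi)
  refine ⟨⟨⟨(x,x), hUm⟩, amalg_mk_ne_zero _ hx0, amalg_mem_zd _ hx⟩,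
    ⟨⟨(y,y+i), hVm⟩, amalg_mk_ne_zero _ hy0, amalg_mem_zd _ hy⟩,
    three_le_edist ?_ ?_ ?_⟩
  · -- the two vertices are distinct
    intro h
    have h' : ((x,x) : R × R) = (y, y+i) :=
      congrArg (fun s => ((s : amalg R I) : R × R)) (congrArg Subtype.val h)
    rw [Prod.ext_iff] at h'
    obtain ⟨h1, h2⟩ := h'
    have h1' : x = y := h1
    have h2' : x = y + i := h2
    rw [h1'] at h2'
    exact hne ⟨h1', by linear_combination -h2'⟩
  · -- not adjacent
    rintro ⟨-, hp⟩
    exact hadj ((amalg_mul_eq_zero_iff hUm hVm).mp hp)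
  · -- no common neighbor
    intro w
    obtain ⟨⟨⟨c, d⟩, hwm⟩, hw0, -⟩ := w
    rintro ⟨⟨-, h1⟩, -, h2⟩
    have e1 := (amalg_mul_eq_zero_iff hUm hwm).mp h1
    have e2 := (amalg_mul_eq_zero_iff hwm hVm).mp h2
    have hc : c = 0 := hreg c (by linear_combination e1.1 + e2.1)
    have hdI : d ∈ I := by
      have h' : d - c ∈ I := hwm
      rwa [hc, sub_zero] at h'
    have hd : d = 0 := hcn d hdI e1.2 (by linear_combination e2.2)
    exact hw0 (by rw [Subtype.ext_iff]; show ((c,d) : R × R) = 0; rw [hc, hd]; rfl)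

/-- The case `x * y = 0` of the main theorem. -/
lemma caseC (x y i : R) (hx : x ∈ zdSet R) (hy : y ∈ zdSet R) (hi : i ∈ I)
    (hi0 : i ≠ 0) (hreg : ∀ c, (x + y) * c = 0 → c = 0)
    (hxy : x * y = 0) (hxi : x * i ≠ 0) :
    ∃ u v : {s : amalg R I // s ≠ 0 ∧ s ∈ zdSet (amalg R I)},
      3 ≤ (zdGraph (amalg R I)).edist u v := by
  have hann : ∀ a b, x * a = 0 → y * b = 0 → a * b = 0 := by
    intro a b ha hb
    exact hreg (a * b) (by linear_combination b * ha + a * hb)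
  by_cases hd : ∃ d, d ∈ I ∧ x * d = 0 ∧ (y + i) * d = 0 ∧ d ≠ 0
  · obtain ⟨d, hdI, hxd, hyid, hd0⟩ := hd
    have hyd : y * d ≠ 0 := by
      intro h
      exact hd0 (hreg d (by linear_combination hxd + h))
    refine key y x d hy hx hdI (fun c hc => hreg c (by linear_combination hc)) ?_ ?_ ?_
    · rintro ⟨-, h⟩; exact hd0 h
    · rintro ⟨-, h⟩
      exact hyd (by linear_combination h - hxy)
    · intro e heI hye hxde
      have hde : d * e = 0 := hann d e hxd hye
      have hxe : x * e = 0 := by linear_combination hxde - hde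
      exact hreg e (by linear_combination hxe + hye)
  · push_neg at hd
    refine key x y i hx hy hi hreg (fun h => hi0 h.2) ?_ ?_
    · rintro ⟨-, h⟩
      exact hxi (by linear_combination h - hxy)
    · intro d hdI h1 h2
      exact hd d hdI h1 h2

end amalgzd

/-- if `I ≠ 0` and `Z(R)` is not an ideal of `R`, then `diam Γ(R ⋈ I) = 3`. -/
theorem stmt15 (R : Type*) [CommRing R] [Nontrivial R] (I : Ideal R) (hI : I ≠ ⊥)
    (hZ : ¬ ∃ J : Ideal R, (J : Set R) = zdSet R) :
    (zdGraph ↥(amalg R I)).ediam = 3 := by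
  -- Z(R) is not closed under addition
  have hsum : ∃ x ∈ zdSet R, ∃ y ∈ zdSet R, x + y ∉ zdSet R := by
    by_contra h
    push_neg at h
    refine hZ ⟨{ carrier := zdSet R
                 add_mem' := fun ha hb => h _ ha _ hb
                 zero_mem' := ⟨1, one_ne_zero, zero_mul 1⟩
                 smul_mem' := ?_ }, rfl⟩
    rintro c x ⟨t, ht0, hxt⟩
    exact ⟨t, ht0, by rw [smul_eq_mul, mul_assoc, hxt, mul_zero]⟩
  obtain ⟨x, hx, y, hy, hxy⟩ := hsum
  have hreg : ∀ c, (x + y) * c = 0 → c = 0 := by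
    intro c hc
    by_contra hc0
    exact hxy ⟨c, hc0, hc⟩
  obtain ⟨i, hiI, hi0⟩ := Submodule.exists_mem_ne_zero_of_ne_bot hI
  have lower : ∃ u v : {s : amalg R I // s ≠ 0 ∧ s ∈ zdSet (amalg R I)},
      3 ≤ (zdGraph (amalg R I)).edist u v := by
    by_cases hxy0 : x * y = 0
    · have hsumi : (x + y) * i ≠ 0 := fun h => hi0 (hreg i h)
      by_cases hxi : x * i = 0
      · have hyi : y * i ≠ 0 := fun h => hsumi (by linear_combination hxi + h)
        exact caseC y x i hy hx hiI hi0
          (fun c hc => hreg c (by linear_combination hc))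
          (by linear_combination hxy0) hyi
      · exact caseC x y i hx hy hiI hi0 hreg hxy0 hxi
    · by_cases hxyeq : x = y
      · subst hxyeq
        refine key x x i hx hx hiI hreg (fun h => hi0 h.2) ?_ ?_
        · rintro ⟨h, -⟩; exact hxy0 h
        · intro d hdI h1 h2
          exact hreg d (by linear_combination 2 * h1)
      · refine key x y 0 hx hy I.zero_mem hreg (fun h => hxyeq h.1) ?_ ?_
        · rintro ⟨h, -⟩; exact hxy0 h
        · intro d hdI h1 h2
          exact hreg d (by linear_combination h1 + h2)
  obtain ⟨u, v, huv⟩ := lower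
  refine le_antisymm ?_ ?_
  · exact SimpleGraph.ediam_le_of_edist_le fun u v => zd_edist_le_three u v
  · exact le_trans huv SimpleGraph.edist_le_ediam
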